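/- Let T : X → Y be a bounded linear operator between Banach spaces, let (x_n)_{n∈ℕ} be a sequence in X with ‖x_n‖ = 1 for all n, and let α > 0. Call a sequence (x̃_m)_{m∈ℕ} a block-subsequence of (x_n) if there exist nonempty finite sets of integers I_m with max I_m < min I_{m+1} for all m, and coefficients c_j ∈ [0,1] with Σ_{j∈I_m} c_j = 1, such that x̃_m = Σ_{j∈I_m} c_j x_j. Assume that for every block-subsequence (x̃_n) of (x_n) and every g ∈ Y one has limsup_{n→∞} ‖T(x̃_n) − g‖ ≥ α. Then for every weakly compact bounded linear operator S : X → Y, ‖T − S‖ ≥ α; that is, ‖T‖_{e,w} ≥ α. -/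

import Mathlib

/-!
A weakly compact `S` maps the normalized sequence `(x n)` into a weakly compact set, so
`(S (x n))` has a weak cluster point `g`. For every `M`, `g` then lies in the weak closure of the
convex hull of `{S (x n) | n > M}`, which by Mazur's theorem is its norm closure. Choosing, block
after block, convex combinations of the `x j` beyond the previous block whose images under `S` are
`1/(m+1)`-close to `g` yields a block-subsequence `y` with `S (y m) → g`. Since `‖y m‖ ≤ 1`,
`‖T (y m) - g‖ ≤ ‖T - S‖ + ‖S (y m) - g‖`, so `α ≤ limsup ‖T (y m) - g‖ ≤ ‖T - S‖`.
-/

open Filter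

/-- `y` is a block-subsequence of `x`: there are nonempty finite sets of integers
`I m` with `max I m < min I (m+1)` and coefficients `c j ∈ [0,1]` summing to `1` on
each block, such that `y m = ∑_{j ∈ I m} c j • x j`. -/
def IsBlockSubsequence {X : Type*} [AddCommMonoid X] [Module ℝ X]
    (x y : ℕ → X) : Prop :=
  ∃ (I : ℕ → Finset ℕ) (c : ℕ → ℝ),
    (∀ m, (I m).Nonempty) ∧
    (∀ m, ∀ i ∈ I m, ∀ j ∈ I (m + 1), i < j) ∧
    (∀ j, c j ∈ Set.Icc (0:ℝ) 1) ∧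
    (∀ m, ∑ j ∈ I m, c j = 1) ∧
    (∀ m, y m = ∑ j ∈ I m, c j • x j)

/-- A bounded linear operator between normed spaces is weakly compact if the closure,
in the weak topology of the codomain, of the image of the closed unit ball is compact. -/
def IsWeaklyCompactOperator {X Y : Type*} [NormedAddCommGroup X] [NormedSpace ℝ X]
    [NormedAddCommGroup Y] [NormedSpace ℝ Y] (S : X →L[ℝ] Y) : Prop :=
  IsCompact (closure ((toWeakSpace ℝ Y) '' (⇑S '' Metric.closedBall 0 1)))

open Topology

theorem exists_finset_of_mem_convexHull_image {R E ι : Type*} [Field R] [LinearOrder R]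
    [IsStrictOrderedRing R] [AddCommGroup E] [Module R E] {x : ι → E} {s : Set ι} {p : E}
    (hp : p ∈ convexHull R (x '' s)) :
    ∃ (I : Finset ι) (c : ι → R), ↑I ⊆ s ∧ (∀ j ∈ I, 0 ≤ c j) ∧ ∑ j ∈ I, c j = 1 ∧
      ∑ j ∈ I, c j • x j = p := by
  classical
  rw [convexHull_eq_union_convexHull_finite_subsets, Set.mem_iUnion₂] at hp
  obtain ⟨t, hts, hpt⟩ := hp
  obtain ⟨w, hw₀, hw₁, rfl⟩ := Finset.mem_convexHull'.mp hpt
  obtain ⟨I, hIs, hinj, rfl⟩ := Finset.exists_subset_injOn_image_eq_of_surjOn s t hts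
  rw [Finset.sum_image hinj] at hw₁ ⊢
  exact ⟨I, w ∘ x, hIs, fun j hj => hw₀ _ (Finset.mem_image_of_mem x hj), hw₁, rfl⟩

theorem lt_of_mem_blocks_of_lt {I : ℕ → Finset ℕ} (hne : ∀ m, (I m).Nonempty)
    (hsep : ∀ m, ∀ i ∈ I m, ∀ j ∈ I (m + 1), i < j) {m m' i j : ℕ} (hmm' : m < m')
    (hi : i ∈ I m) (hj : j ∈ I m') : i < j := by
  induction hmm' generalizing j with
  | refl => exact hsep m i hi j hj
  | step _ ih =>
    obtain ⟨k, hk⟩ := hne _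
    exact (ih hk).trans (hsep _ k hk j hj)

section BlockSubsequence

variable {X : Type*} [AddCommMonoid X] [Module ℝ X]

theorem isBlockSubsequence_of_blocks {x y : ℕ → X} (I : ℕ → Finset ℕ) (C : ℕ → ℕ → ℝ)
    (hne : ∀ m, (I m).Nonempty) (hsep : ∀ m, ∀ i ∈ I m, ∀ j ∈ I (m + 1), i < j)
    (hC₀ : ∀ m, ∀ j ∈ I m, 0 ≤ C m j) (hC₁ : ∀ m, ∑ j ∈ I m, C m j = 1)
    (hy : ∀ m, y m = ∑ j ∈ I m, C m j • x j) : IsBlockSubsequence x y := by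
  classical
  have block_unique {m m' j : ℕ} (hj : j ∈ I m) (hj' : j ∈ I m') : m' = m :=
    le_antisymm (not_lt.1 fun h => lt_irrefl j (lt_of_mem_blocks_of_lt hne hsep h hj hj'))
      (not_lt.1 fun h => lt_irrefl j (lt_of_mem_blocks_of_lt hne hsep h hj' hj))
  let c : ℕ → ℝ := fun j => if h : ∃ m, j ∈ I m then C h.choose j else 0
  have hc {m j : ℕ} (hj : j ∈ I m) : c j = C m j := by
    have h : ∃ m, j ∈ I m := ⟨m, hj⟩
    simp only [c, dif_pos h, block_unique hj h.choose_spec]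
  refine ⟨I, c, hne, hsep, fun j => ?_, fun m => ?_, fun m => ?_⟩
  · by_cases h : ∃ m, j ∈ I m
    · obtain ⟨m, hj⟩ := h
      rw [hc hj]
      exact ⟨hC₀ m j hj, hC₁ m ▸ Finset.single_le_sum (hC₀ m) hj⟩
    · simp [c, h]
  · rw [Finset.sum_congr rfl fun j => hc, hC₁]
  · rw [hy]
    exact Finset.sum_congr rfl fun j hj => by rw [hc hj]

theorem exists_isBlockSubsequence (x : ℕ → X) (P : ℕ → X → Prop)
    (h : ∀ m M, ∃ (I : Finset ℕ) (c : ℕ → ℝ), (∀ j ∈ I, M < j) ∧ (∀ j ∈ I, 0 ≤ c j) ∧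
      ∑ j ∈ I, c j = 1 ∧ P m (∑ j ∈ I, c j • x j)) :
    ∃ y, IsBlockSubsequence x y ∧ ∀ m, P m (y m) := by
  choose I c hIM hc₀ hc₁ hP using h
  -- `M m` is the largest index used by the blocks before the `m`-th one (`0` if there are none).
  let M : ℕ → ℕ := fun m => Nat.rec 0 (fun m Mm => (I m Mm).sup id) m
  refine ⟨_, isBlockSubsequence_of_blocks (fun m => I m (M m)) (fun m => c m (M m))
    (fun m => ?_) (fun m i hi j hj => ?_) (fun m => hc₀ m _) (fun m => hc₁ m _) fun _ => rfl,
    fun m => hP m _⟩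
  · exact Finset.nonempty_of_sum_ne_zero ((hc₁ m _).symm ▸ one_ne_zero)
  · exact (Finset.le_sup (f := id) hi).trans_lt (hIM _ _ j hj)

end BlockSubsequence

theorem IsBlockSubsequence.mem_of_convex {X : Type*} [AddCommGroup X] [Module ℝ X]
    {x y : ℕ → X} (hy : IsBlockSubsequence x y) {s : Set X} (hs : Convex ℝ s)
    (hx : ∀ n, x n ∈ s) (m : ℕ) : y m ∈ s := by
  obtain ⟨I, c, -, -, hc, hc₁, hy_eq⟩ := hy
  rw [hy_eq]
  exact hs.sum_mem (fun j _ => (hc j).1) (hc₁ m) fun j _ => hx j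

section Operators

variable {X Y : Type*} [NormedAddCommGroup X] [NormedSpace ℝ X] [NormedAddCommGroup Y]
  [NormedSpace ℝ Y]

theorem IsWeaklyCompactOperator.exists_forall_mem_closure_image_convexHull {S : X →L[ℝ] Y}
    (hS : IsWeaklyCompactOperator S) {x : ℕ → X} (hx : ∀ n, ‖x n‖ ≤ 1) :
    ∃ g : Y, ∀ M, g ∈ closure (S '' convexHull ℝ (x '' Set.Ioi M)) := by
  have hmaps : map (fun n => toWeakSpace ℝ Y (S (x n))) atTop ≤ 𝓟 (closure
      (toWeakSpace ℝ Y '' (S '' Metric.closedBall 0 1))) :=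
    le_principal_iff.mpr <| eventually_map.mpr <| Eventually.of_forall fun n => subset_closure <|
      Set.mem_image_of_mem _ <| Set.mem_image_of_mem S <| mem_closedBall_zero_iff.mpr (hx n)
  obtain ⟨g, -, hg⟩ := hS.exists_mapClusterPt hmaps
  refine ⟨(toWeakSpace ℝ Y).symm g, fun M => ?_⟩
  have hconv : Convex ℝ (S '' convexHull ℝ (x '' Set.Ioi M)) :=
    (convex_convexHull ℝ _).linear_image S.toLinearMap
  have hg_mem : g ∈ toWeakSpace ℝ Y '' closure (S '' convexHull ℝ (x '' Set.Ioi M)) := by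
    rw [hconv.toWeakSpace_closure ℝ]
    refine closure_mono ?_ (mapClusterPt_atTop_iff_forall_mem_closure.mp hg (M + 1))
    rintro _ ⟨n, hn, rfl⟩
    exact Set.mem_image_of_mem _ <| Set.mem_image_of_mem S <|
      subset_convexHull ℝ _ <| Set.mem_image_of_mem x hn
  obtain ⟨z, hz, rfl⟩ := hg_mem
  simpa using hz

theorem limsup_norm_apply_sub_le_opNorm_sub {ι : Type*} {l : Filter ι} [l.NeBot]
    (T S : X →L[ℝ] Y) {y : ι → X} (hy : ∀ i, ‖y i‖ ≤ 1) {g : Y}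
    (hSy : Tendsto (fun i => S (y i)) l (𝓝 g)) :
    limsup (fun i => ‖T (y i) - g‖) l ≤ ‖T - S‖ := by
  have hbound (i : ι) : ‖T (y i) - g‖ ≤ ‖T - S‖ + ‖S (y i) - g‖ := calc
    ‖T (y i) - g‖ = ‖(T - S) (y i) + (S (y i) - g)‖ := by
      rw [sub_apply, sub_add_sub_cancel]
    _ ≤ ‖(T - S) (y i)‖ + ‖S (y i) - g‖ := norm_add_le _ _
    _ ≤ ‖T - S‖ + ‖S (y i) - g‖ := by gcongr; exact (T - S).unit_le_opNorm _ (hy i)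
  have hlim : Tendsto (fun i => ‖T - S‖ + ‖S (y i) - g‖) l (𝓝 ‖T - S‖) := by
    simpa using tendsto_const_nhds.add (tendsto_iff_norm_sub_tendsto_zero.mp hSy)
  calc limsup (fun i => ‖T (y i) - g‖) l
      ≤ limsup (fun i => ‖T - S‖ + ‖S (y i) - g‖) l :=
        limsup_le_limsup (Eventually.of_forall hbound)
          (isCoboundedUnder_le_of_le l fun _ => norm_nonneg _) hlim.isBoundedUnder_le
    _ = ‖T - S‖ := hlim.limsup_eq

end Operators

theorem weakEssentialNorm_lower_bound_of_blockSubseq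
    {X Y : Type*} [NormedAddCommGroup X] [NormedSpace ℝ X]
    [NormedAddCommGroup Y] [NormedSpace ℝ Y]
    (T : X →L[ℝ] Y) (x : ℕ → X) (hx : ∀ n, ‖x n‖ = 1) (α : ℝ)
    (h : ∀ y : ℕ → X, IsBlockSubsequence x y → ∀ g : Y,
      α ≤ limsup (fun n => ‖T (y n) - g‖) atTop) :
    ∀ S : X →L[ℝ] Y, IsWeaklyCompactOperator S → α ≤ ‖T - S‖ := by
  intro S hS
  obtain ⟨g, hg⟩ := hS.exists_forall_mem_closure_image_convexHull fun n => (hx n).le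
  obtain ⟨y, hy, hSy⟩ := exists_isBlockSubsequence x (fun m v => dist (S v) g < 1 / (m + 1))
    fun m M => by
      obtain ⟨_, ⟨p, hp, rfl⟩, hpg⟩ := Metric.mem_closure_iff.mp (hg M) _ Nat.one_div_pos_of_nat
      obtain ⟨I, c, hIM, hc₀, hc₁, rfl⟩ := exists_finset_of_mem_convexHull_image hp
      exact ⟨I, c, hIM, hc₀, hc₁, by rwa [dist_comm]⟩
  have hy_le (m : ℕ) : ‖y m‖ ≤ 1 := mem_closedBall_zero_iff.mp <|
    hy.mem_of_convex (convex_closedBall 0 1) (fun n => mem_closedBall_zero_iff.mpr (hx n).le) m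
  have hSy_tendsto : Tendsto (fun m => S (y m)) atTop (𝓝 g) :=
    tendsto_iff_dist_tendsto_zero.mpr <| squeeze_zero (fun _ => dist_nonneg)
      (fun m => (hSy m).le) tendsto_one_div_add_atTop_nhds_zero_nat
  exact (h y hy g).trans (limsup_norm_apply_sub_le_opNorm_sub T S hy_le hSy_tendsto)
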